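/- arXiv:1202.2485 — 5 statements merged into one kernel-verified Lean document; each statement's English description precedes it below -/
import Mathlib

section
/- Let (φ_i)_{i∈I} be a family of continuous multifunctions from X to nonempty subsets of X which is precompact with respect to the supremum Hausdorff semimetric h_sup(φ,ψ) = sup_x h(φ(x),ψ(x)). Then the pointwise union multifunction x ↦ ⋃_{i∈I} φ_i(x) is continuous with respect to the Hausdorff distance. -/
/-!
A precompact family of continuous multifunctions is equicontinuous: given `ε`, every member is
uniformly `ε/3`-close to one of finitely many members, and these finitely many are jointly
`ε/3`-continuous at `x₀`, so the triangle inequality for the Hausdorff distance bounds the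
oscillation of every member by `ε`. The Hausdorff distance between two unions is at most the
supremum of the distances between corresponding members, which gives the continuity of the union.
-/

open Metric Filter Topology

theorem eventually_forall_hausdorffEDist_lt_of_totallyBounded
    {X α ι : Type*} [TopologicalSpace X] [PseudoEMetricSpace α] {φ : ι → X → Set α} {x₀ : X}
    (hcont : ∀ i, ∀ ε > (0 : ℝ), ∀ᶠ x in 𝓝 x₀,
      hausdorffEDist (φ i x) (φ i x₀) < ENNReal.ofReal ε)
    (htot : ∀ ε > (0 : ℝ), ∃ J : Finset ι, ∀ i, ∃ j ∈ J,
      ∀ x, hausdorffEDist (φ i x) (φ j x) < ENNReal.ofReal ε)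
    {ε : ℝ} (hε : 0 < ε) :
    ∀ᶠ x in 𝓝 x₀, ∀ i, hausdorffEDist (φ i x) (φ i x₀) < ENNReal.ofReal ε := by
  have hε3 : 0 < ε / 3 := by positivity
  obtain ⟨J, hJ⟩ := htot (ε / 3) hε3
  have hJcont : ∀ᶠ x in 𝓝 x₀, ∀ j ∈ J,
      hausdorffEDist (φ j x) (φ j x₀) < ENNReal.ofReal (ε / 3) :=
    (eventually_all_finset J).2 fun j _ => hcont j _ hε3
  filter_upwards [hJcont] with x hx i
  obtain ⟨j, hjJ, hij⟩ := hJ i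
  calc hausdorffEDist (φ i x) (φ i x₀)
      ≤ hausdorffEDist (φ i x) (φ j x) + hausdorffEDist (φ j x) (φ j x₀)
          + hausdorffEDist (φ j x₀) (φ i x₀) :=
        hausdorffEDist_triangle.trans (add_le_add_left hausdorffEDist_triangle _)
    _ < ENNReal.ofReal (ε / 3) + ENNReal.ofReal (ε / 3) + ENNReal.ofReal (ε / 3) := by
        rw [hausdorffEDist_comm (s := φ j x₀)]
        exact ENNReal.add_lt_add (ENNReal.add_lt_add (hij x) (hx j hjJ)) (hij x₀)
    _ = ENNReal.ofReal ε := by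
        rw [← ENNReal.ofReal_add hε3.le hε3.le, ← ENNReal.ofReal_add (by positivity) hε3.le]
        ring_nf

theorem union_of_precompact_family_continuous_general {X : Type*} [MetricSpace X]
    {I : Type*} (φ : I → X → Set X)
    (hcont : ∀ i x₀, ∀ ε > (0 : ℝ), ∃ δ > (0 : ℝ), ∀ x, dist x x₀ < δ →
      EMetric.hausdorffEdist (φ i x) (φ i x₀) < ENNReal.ofReal ε)
    (hprecompact : ∀ ε > (0 : ℝ), ∃ J : Finset I, J.Nonempty ∧ ∀ i : I, ∃ j ∈ J,
      ∀ x, EMetric.hausdorffEdist (φ i x) (φ j x) < ENNReal.ofReal ε) :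
    ∀ x₀, ∀ ε > (0 : ℝ), ∃ δ > (0 : ℝ), ∀ x, dist x x₀ < δ →
      EMetric.hausdorffEdist (⋃ i, φ i x) (⋃ i, φ i x₀) < ENNReal.ofReal ε := by
  intro x₀ ε hε
  have hequi := eventually_forall_hausdorffEDist_lt_of_totallyBounded
    (fun i ε hε => Metric.eventually_nhds_iff.2 (hcont i x₀ ε hε))
    (fun ε hε => (hprecompact ε hε).imp fun _ hJ => hJ.2) (half_pos hε)
  obtain ⟨δ, hδ, hclose⟩ := Metric.eventually_nhds_iff.1 hequi
  refine ⟨δ, hδ, fun x hx => ?_⟩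
  calc hausdorffEDist (⋃ i, φ i x) (⋃ i, φ i x₀)
      ≤ ⨆ i, hausdorffEDist (φ i x) (φ i x₀) := hausdorffEDist_iUnion_le
    _ ≤ ENNReal.ofReal (ε / 2) := iSup_le fun i => (hclose hx i).le
    _ < ENNReal.ofReal ε := (ENNReal.ofReal_lt_ofReal_iff hε).2 (half_lt_self hε)

theorem union_of_precompact_family_continuous {X : Type*} [MetricSpace X]
    {I : Type*} [Nonempty I] (φ : I → X → Set X)
    (hne : ∀ i x, (φ i x).Nonempty)
    (hcont : ∀ i x₀, ∀ ε > (0 : ℝ), ∃ δ > (0 : ℝ), ∀ x, dist x x₀ < δ →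
      EMetric.hausdorffEdist (φ i x) (φ i x₀) < ENNReal.ofReal ε)
    (hprecompact : ∀ ε > (0 : ℝ), ∃ J : Finset I, J.Nonempty ∧ ∀ i : I, ∃ j ∈ J,
      ∀ x, EMetric.hausdorffEdist (φ i x) (φ j x) < ENNReal.ofReal ε) :
    ∀ x₀, ∀ ε > (0 : ℝ), ∃ δ > (0 : ℝ), ∀ x, dist x x₀ < δ →
      EMetric.hausdorffEdist (⋃ i, φ i x) (⋃ i, φ i x₀) < ENNReal.ofReal ε :=
  union_of_precompact_family_continuous_general φ hcont hprecompact
end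

section
/- Let φ : X → 𝒫(X)∖{∅} be continuous and C ⊆ X nonempty compact. Then for every ε > 0 there exists δ > 0 such that for every nonempty B ⊆ N_δ(C) one has φ(N_δ(B)) ⊆ N_ε(φ(B)). -/
open Metric Set

/-! The map `x ↦ φ x` is continuous for the Hausdorff pseudo-emetric on `Set X`, so by
Heine–Cantor at the compact set `C` there is `δ` with `h(φ c, φ x) < ε / 2` whenever `c ∈ C`
and `d(c, x) < δ`. A point `x` of `N_{δ/2}(B)` and the point `b ∈ B` it is close to are then both
within `δ` of one `c ∈ C`, so `h(φ x, φ b) < ε`, and every point of `φ x` lies within `ε` of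
`φ b ⊆ φ(B)`. -/

theorem IsCompact.exists_pos_forall_dist_lt_edist_lt {α β : Type*} [PseudoMetricSpace α]
    [PseudoEMetricSpace β] {s : Set α} (hs : IsCompact s) {f : α → β}
    (hf : ∀ a ∈ s, ContinuousAt f a) {ε : ENNReal} (hε : 0 < ε) :
    ∃ δ > 0, ∀ a ∈ s, ∀ b, dist a b < δ → edist (f a) (f b) < ε := by
  obtain ⟨δ, hδ, hδs⟩ := Metric.mem_uniformity_dist.1 <|
    hs.uniformContinuousAt_of_continuousAt f hf (edist_mem_uniformity hε)
  exact ⟨δ, hδ, fun a ha b hab => hδs hab ha⟩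

theorem continuousAt_of_forall_edist_lt_ofReal {α β : Type*} [PseudoMetricSpace α]
    [PseudoEMetricSpace β] {f : α → β} {a : α}
    (hf : ∀ ε > (0 : ℝ), ∃ δ > (0 : ℝ), ∀ x, dist x a < δ → edist (f x) (f a) < ENNReal.ofReal ε) :
    ContinuousAt f a := by
  refine EMetric.continuousAt_iff.2 fun ε hε => ?_
  obtain ⟨r, -, hr0, hrε⟩ := ENNReal.lt_iff_exists_real_btwn.1 hε
  obtain ⟨δ, hδ, hδf⟩ := hf r (ENNReal.ofReal_pos.1 hr0)
  refine ⟨ENNReal.ofReal δ, ENNReal.ofReal_pos.2 hδ, fun {x} hx => (hδf x ?_).trans hrε⟩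
  exact edist_lt_ofReal.1 hx

theorem Metric.mem_thickening_of_hausdorffEDist_lt {X : Type*} [PseudoMetricSpace X]
    {s t : Set X} {x : X} {ε : ℝ} (hx : x ∈ s) (hst : hausdorffEDist s t < ENNReal.ofReal ε) :
    x ∈ thickening ε t :=
  mem_thickening_iff_infEDist_lt.2 ((infEDist_le_hausdorffEDist_of_mem hx).trans_lt hst)

theorem cantor_weierstrass_uniform_continuity_II_general {X : Type*} [MetricSpace X]
    (φ : X → Set X)
    (hcont : ∀ x₀, ∀ ε > (0 : ℝ), ∃ δ > (0 : ℝ), ∀ x, dist x x₀ < δ →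
      EMetric.hausdorffEdist (φ x) (φ x₀) < ENNReal.ofReal ε)
    (C : Set X) (hCc : IsCompact C) :
    ∀ ε > (0 : ℝ), ∃ δ > (0 : ℝ), ∀ B : Set X, B.Nonempty →
      B ⊆ Metric.thickening δ C →
      (⋃ x ∈ Metric.thickening δ B, φ x) ⊆
        Metric.thickening ε (⋃ b ∈ B, φ b) := by
  let := PseudoEMetricSpace.hausdorff (α := X)
  intro ε hε
  obtain ⟨δ, hδ, hφδ⟩ := hCc.exists_pos_forall_dist_lt_edist_lt
    (fun c _ => continuousAt_of_forall_edist_lt_ofReal (f := φ) (hcont c))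
    (ENNReal.ofReal_pos.2 (half_pos hε))
  refine ⟨δ / 2, half_pos hδ, fun B _ hBC y hy => ?_⟩
  obtain ⟨x, hx, hyx⟩ := mem_iUnion₂.1 hy
  obtain ⟨b, hb, hxb⟩ := mem_thickening_iff.1 hx
  obtain ⟨c, hc, hbc⟩ := mem_thickening_iff.1 (hBC hb)
  rw [dist_comm] at hbc
  have hcx : dist c x < δ := by linarith [dist_triangle_right c x b]
  have hφxb : hausdorffEDist (φ x) (φ b) < ENNReal.ofReal ε := calc
    hausdorffEDist (φ x) (φ b) ≤ edist (φ c) (φ x) + edist (φ c) (φ b) :=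
      edist_triangle_left (φ x) (φ b) (φ c)
    _ < ENNReal.ofReal (ε / 2) + ENNReal.ofReal (ε / 2) :=
      ENNReal.add_lt_add (hφδ c hc x hcx) (hφδ c hc b (by linarith))
    _ = ENNReal.ofReal ε := by rw [← ENNReal.ofReal_add (by positivity) (by positivity), add_halves]
  exact thickening_subset_of_subset ε (subset_biUnion_of_mem (u := φ) hb)
    (mem_thickening_of_hausdorffEDist_lt hyx hφxb)

theorem cantor_weierstrass_uniform_continuity_II {X : Type*} [MetricSpace X]
    (φ : X → Set X) (hne : ∀ x, (φ x).Nonempty)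
    (hcont : ∀ x₀, ∀ ε > (0 : ℝ), ∃ δ > (0 : ℝ), ∀ x, dist x x₀ < δ →
      EMetric.hausdorffEdist (φ x) (φ x₀) < ENNReal.ofReal ε)
    (C : Set X) (hC : C.Nonempty) (hCc : IsCompact C) :
    ∀ ε > (0 : ℝ), ∃ δ > (0 : ℝ), ∀ B : Set X, B.Nonempty →
      B ⊆ Metric.thickening δ C →
      (⋃ x ∈ Metric.thickening δ B, φ x) ⊆
        Metric.thickening ε (⋃ b ∈ B, φ b) :=
  cantor_weierstrass_uniform_continuity_II_general φ hcont C hCc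
end

section
/- Let φ : X → 𝒫(X)∖{∅} be a continuous multifunction. Then the induced Hutchinson operator F(B) = cl(⋃_{b∈B} φ(b)) on nonempty subsets of X, with the Hausdorff distance, is continuous at every nonempty compact set C: for every ε > 0 there is δ > 0 such that h(B,C) < δ implies h(F(B),F(C)) ≤ ε for all nonempty B ⊆ X. -/
/-!
By Heine–Cantor, applied to `φ` as a map into `Set X` with the Hausdorff pseudo-emetric, the
continuity of `φ` is uniform on the compact set `C`. So if `B` and `C` are `δ`-close in the
Hausdorff distance, every `φ b` (`b ∈ B`) is `ε`-close to some `φ c` (`c ∈ C`) and vice versa,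
hence the two unions are `ε`-close; taking closures does not change the Hausdorff distance.
-/

open Set Metric
open scoped ENNReal

namespace Metric

theorem infEDist_biUnion_le_hausdorffEDist {ι κ α : Type*} [PseudoEMetricSpace α]
    {φ : ι → Set α} {ψ : κ → Set α} {C : Set κ} {b : ι} {c : κ} {x : α}
    (hx : x ∈ φ b) (hc : c ∈ C) :
    infEDist x (⋃ c ∈ C, ψ c) ≤ hausdorffEDist (φ b) (ψ c) :=
  (infEDist_anti (subset_biUnion_of_mem hc)).trans (infEDist_le_hausdorffEDist_of_mem hx)

theorem hausdorffEDist_biUnion_le {ι κ α : Type*} [PseudoEMetricSpace α]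
    {φ : ι → Set α} {ψ : κ → Set α} {B : Set ι} {C : Set κ} {r : ℝ≥0∞}
    (hB : ∀ b ∈ B, ∃ c ∈ C, hausdorffEDist (φ b) (ψ c) ≤ r)
    (hC : ∀ c ∈ C, ∃ b ∈ B, hausdorffEDist (ψ c) (φ b) ≤ r) :
    hausdorffEDist (⋃ b ∈ B, φ b) (⋃ c ∈ C, ψ c) ≤ r := by
  refine hausdorffEDist_le_of_infEDist (fun x hx => ?_) (fun y hy => ?_)
  · obtain ⟨b, hb, hxb⟩ := mem_iUnion₂.1 hx
    obtain ⟨c, hc, hbc⟩ := hB b hb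
    exact (infEDist_biUnion_le_hausdorffEDist hxb hc).trans hbc
  · obtain ⟨c, hc, hyc⟩ := mem_iUnion₂.1 hy
    obtain ⟨b, hb, hcb⟩ := hC c hc
    exact (infEDist_biUnion_le_hausdorffEDist hyc hb).trans hcb

end Metric

theorem IsCompact.exists_pos_forall_dist_lt_hausdorffEDist_lt {X Y : Type*}
    [PseudoMetricSpace X] [PseudoEMetricSpace Y] {C : Set X} (hC : IsCompact C)
    {φ : X → Set Y}
    (hφ : ∀ c ∈ C, ∀ ε > (0 : ℝ), ∃ δ > (0 : ℝ), ∀ x, dist x c < δ →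
      hausdorffEDist (φ x) (φ c) < ENNReal.ofReal ε)
    {ε : ℝ} (hε : 0 < ε) :
    ∃ δ > (0 : ℝ), ∀ c ∈ C, ∀ x, dist x c < δ →
      hausdorffEDist (φ x) (φ c) < ENNReal.ofReal ε := by
  let := PseudoEMetricSpace.hausdorff (α := Y)
  have hcont : ∀ c ∈ C, ContinuousAt φ c := by
    refine fun c hc => EMetric.continuousAt_iff.2 fun η hη => ?_
    obtain ⟨r, -, hr, hrη⟩ := ENNReal.lt_iff_exists_real_btwn.1 hη
    obtain ⟨δ, hδ, hφδ⟩ := hφ c hc r (ENNReal.ofReal_pos.1 hr)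
    exact ⟨ENNReal.ofReal δ, ENNReal.ofReal_pos.2 hδ,
      fun x hx => (hφδ x (edist_lt_ofReal.1 hx)).trans hrη⟩
  obtain ⟨δ, hδ, hδφ⟩ := mem_uniformity_edist.1 <|
    hC.uniformContinuousAt_of_continuousAt φ hcont (edist_mem_uniformity (ENNReal.ofReal_pos.2 hε))
  obtain ⟨r, -, hr, hrδ⟩ := ENNReal.lt_iff_exists_real_btwn.1 hδ
  refine ⟨r, ENNReal.ofReal_pos.1 hr, fun c hc x hx => ?_⟩
  rw [← edist_lt_ofReal, edist_comm] at hx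
  rw [hausdorffEDist_comm]
  exact hδφ (hx.trans hrδ) hc

theorem hutchinson_continuous_at_compacta_general {X : Type*} [MetricSpace X]
    (φ : X → Set X)
    (hcont : ∀ x₀, ∀ ε > (0 : ℝ), ∃ δ > (0 : ℝ), ∀ x, dist x x₀ < δ →
      EMetric.hausdorffEdist (φ x) (φ x₀) < ENNReal.ofReal ε)
    (F : Set X → Set X) (hF : ∀ B : Set X, F B = closure (⋃ b ∈ B, φ b))
    (C : Set X) (hCc : IsCompact C) :
    ∀ ε > (0 : ℝ), ∃ δ > (0 : ℝ), ∀ B : Set X, B.Nonempty →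
      EMetric.hausdorffEdist B C < ENNReal.ofReal δ →
      EMetric.hausdorffEdist (F B) (F C) ≤ ENNReal.ofReal ε := by
  intro ε hε
  obtain ⟨δ, hδ, hφδ⟩ := hCc.exists_pos_forall_dist_lt_hausdorffEDist_lt (fun c _ => hcont c) hε
  refine ⟨δ, hδ, fun B _ hBC => ?_⟩
  unfold EMetric.hausdorffEdist at hBC ⊢
  rw [hF, hF, hausdorffEDist_closure]
  refine hausdorffEDist_biUnion_le (fun b hb => ?_) (fun c hc => ?_)
  · obtain ⟨c, hc, hbc⟩ := exists_edist_lt_of_hausdorffEDist_lt hb hBC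
    exact ⟨c, hc, (hφδ c hc b (edist_lt_ofReal.1 hbc)).le⟩
  · rw [hausdorffEDist_comm] at hBC
    obtain ⟨b, hb, hcb⟩ := exists_edist_lt_of_hausdorffEDist_lt hc hBC
    rw [edist_comm, edist_lt_ofReal] at hcb
    exact ⟨b, hb, hausdorffEDist_comm.trans_le (hφδ c hc b hcb).le⟩

theorem hutchinson_continuous_at_compacta {X : Type*} [MetricSpace X]
    (φ : X → Set X) (hne : ∀ x, (φ x).Nonempty)
    (hcont : ∀ x₀, ∀ ε > (0 : ℝ), ∃ δ > (0 : ℝ), ∀ x, dist x x₀ < δ →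
      EMetric.hausdorffEdist (φ x) (φ x₀) < ENNReal.ofReal ε)
    (F : Set X → Set X) (hF : ∀ B : Set X, F B = closure (⋃ b ∈ B, φ b))
    (C : Set X) (hC : C.Nonempty) (hCc : IsCompact C) :
    ∀ ε > (0 : ℝ), ∃ δ > (0 : ℝ), ∀ B : Set X, B.Nonempty →
      EMetric.hausdorffEdist B C < ENNReal.ofReal δ →
      EMetric.hausdorffEdist (F B) (F C) ≤ ENNReal.ofReal ε :=
  hutchinson_continuous_at_compacta_general φ hcont F hF C hCc
end

section
/- Let (f_i)_{i∈I} be a family of continuous self-maps of X that is compact in the uniform (supremum) metric. Then the Hutchinson operator F(B) = cl{f_i(b) : i ∈ I, b ∈ B} maps nonempty compact sets to nonempty compact sets and is continuous as a map from (𝒦(X), h) to itself. -/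
/-!
A family of continuous maps that is compact (indeed totally bounded) in the uniform metric is
equicontinuous: an `ε/3` argument over a finite net. Equicontinuity says that
`x ↦ (f i x)_i` is continuous into `I →ᵤ X`, hence uniformly continuous at the points of a
compact set `C`; so points of `B` that are `δ`-close to points of `C` (and vice versa) have all
their images `ε`-close, which bounds the Hausdorff distance of `F B` and `F C`.
The set `⋃ i, f i '' B` is the image of the compact set `{f i} ×ˢ B` under evaluation, which is
jointly continuous at continuous maps; so it is compact, and equal to its closure `F B`.
-/

open Set Filter Topology UniformFun Metric
open scoped UniformConvergence

theorem UniformFun.continuousAt_eval₂ {α β : Type*} [TopologicalSpace α] [UniformSpace β]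
    {f : α →ᵤ β} {x : α} (hc : ContinuousAt (toFun f) x) :
    ContinuousAt (fun fx : (α →ᵤ β) × α ↦ toFun fx.1 fx.2) (f, x) := by
  rw [ContinuousAt, nhds_eq_comap_uniformity, tendsto_comap_iff, ← lift'_comp_uniformity,
    tendsto_lift']
  intro U hU
  filter_upwards [prod_mem_nhds
    (UniformSpace.ball_mem_nhds f ((UniformFun.hasBasis_uniformity α β).mem_of_mem hU))
    (hc <| UniformSpace.ball_mem_nhds _ hU)] with ⟨g, y⟩ ⟨hg, hy⟩ using ⟨toFun f y, hy, hg y⟩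

theorem isCompact_iUnion_image_of_isCompact_range {ι X α : Type*} [TopologicalSpace X]
    [UniformSpace α] {F : ι → X → α} (hc : ∀ i, Continuous (F i))
    (hF : IsCompact (range fun i ↦ ofFun (F i))) {B : Set X} (hB : IsCompact B) :
    IsCompact (⋃ i, F i '' B) := by
  have heval : ContinuousOn (fun gx : (X →ᵤ α) × X ↦ toFun gx.1 gx.2)
      ((range fun i ↦ ofFun (F i)) ×ˢ B) := by
    rintro ⟨_, x⟩ ⟨⟨i, rfl⟩, -⟩
    exact (UniformFun.continuousAt_eval₂ (hc i).continuousAt).continuousWithinAt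
  convert (hF.prod hB).image_of_continuousOn heval using 1
  ext y
  simp [and_comm]

theorem equicontinuous_of_totallyBounded_range {ι X α : Type*} [TopologicalSpace X]
    [UniformSpace α] {F : ι → X → α} (hc : ∀ i, Continuous (F i))
    (hF : TotallyBounded (range fun i ↦ ofFun (F i))) : Equicontinuous F := by
  intro x₀ U hU
  obtain ⟨V, hV, hVsymm, hVU⟩ := comp_comp_symm_mem_uniformity_sets hU
  obtain ⟨t, htF, htfin, hcover⟩ :=
    totallyBounded_iff_subset.mp hF _ ((UniformFun.hasBasis_uniformity X α).mem_of_mem hV)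
  have hnear : ∀ᶠ x in 𝓝 x₀, ∀ g ∈ t, (toFun g x₀, toFun g x) ∈ V := by
    refine (eventually_all_finite htfin).2 fun g hg ↦ ?_
    obtain ⟨i, rfl⟩ := htF hg
    exact (hc i).continuousAt (UniformSpace.ball_mem_nhds _ hV)
  filter_upwards [hnear] with x hx i
  obtain ⟨g, hg, hig⟩ := mem_iUnion₂.mp (hcover ⟨i, rfl⟩)
  exact hVU <| SetRel.prodMk_mem_comp (SetRel.prodMk_mem_comp (hig x₀) (hx g hg))
    (SetRel.symm V (hig x))

theorem Equicontinuous.exists_pos_forall_dist_lt_of_isCompact {ι X Y : Type*}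
    [PseudoMetricSpace X] [PseudoMetricSpace Y] {F : ι → X → Y} (hF : Equicontinuous F)
    {C : Set X} (hC : IsCompact C) {ε : ℝ} (hε : 0 < ε) :
    ∃ δ > 0, ∀ c ∈ C, ∀ x, dist c x < δ → ∀ i, dist (F i c) (F i x) < ε := by
  have hφ := equicontinuous_iff_continuous.1 hF
  obtain ⟨δ, hδ, h⟩ := mem_uniformity_dist.1 <| hC.uniformContinuousAt_of_continuousAt _
    (fun c _ ↦ hφ.continuousAt) ((UniformFun.hasBasis_uniformity ι Y).mem_of_mem
      (dist_mem_uniformity hε))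
  exact ⟨δ, hδ, fun c hc x hcx i ↦ h hcx hc i⟩

theorem hausdorffEDist_iUnion_image_le {ι α β : Type*} [PseudoMetricSpace α]
    [PseudoMetricSpace β] {F : ι → α → β} {B C : Set α} {δ ε : ℝ}
    (hF : ∀ c ∈ C, ∀ b, dist c b < δ → ∀ i, dist (F i c) (F i b) ≤ ε)
    (hBC : hausdorffEDist B C < ENNReal.ofReal δ) :
    hausdorffEDist (⋃ i, F i '' B) (⋃ i, F i '' C) ≤ ENNReal.ofReal ε := by
  have hF' : ∀ c ∈ C, ∀ b, edist c b < ENNReal.ofReal δ → ∀ i,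
      edist (F i c) (F i b) ≤ ENNReal.ofReal ε := fun c hc b hcb i ↦ by
    rw [edist_dist] at hcb ⊢
    exact ENNReal.ofReal_le_ofReal (hF c hc b ((ENNReal.ofReal_lt_ofReal_iff'.1 hcb).1) i)
  refine hausdorffEDist_le_of_mem_edist ?_ ?_
  · rintro _ ⟨_, ⟨i, rfl⟩, b, hb, rfl⟩
    obtain ⟨c, hc, hbc⟩ := exists_edist_lt_of_hausdorffEDist_lt hb hBC
    rw [edist_comm] at hbc
    exact ⟨F i c, mem_iUnion_of_mem i (mem_image_of_mem _ hc),
      edist_comm (F i c) (F i b) ▸ hF' c hc b hbc i⟩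
  · rintro _ ⟨_, ⟨i, rfl⟩, c, hc, rfl⟩
    obtain ⟨b, hb, hcb⟩ := exists_edist_lt_of_hausdorffEDist_lt hc
      (by rwa [hausdorffEDist_comm] at hBC)
    exact ⟨F i b, mem_iUnion_of_mem i (mem_image_of_mem _ hb), hF' c hc b hcb i⟩

theorem hutchinson_of_compact_ifs_continuous {X : Type*} [MetricSpace X]
    {I : Type*} [Nonempty I] (f : I → X → X)
    (hcont : ∀ i, Continuous (f i))
    (hcompact : IsCompact (Set.range (fun i => UniformFun.ofFun (f i)) : Set (UniformFun X X)))
    (F : Set X → Set X) (hF : ∀ B : Set X, F B = closure (⋃ i, f i '' B)) :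
    (∀ B : Set X, B.Nonempty → IsCompact B → (F B).Nonempty ∧ IsCompact (F B)) ∧
    (∀ C : Set X, C.Nonempty → IsCompact C → ∀ ε > (0 : ℝ), ∃ δ > (0 : ℝ),
      ∀ B : Set X, B.Nonempty → IsCompact B →
        EMetric.hausdorffEdist B C < ENNReal.ofReal δ →
        EMetric.hausdorffEdist (F B) (F C) ≤ ENNReal.ofReal ε) := by
  refine ⟨fun B hBne hB ↦ ?_, fun C _ hC ε hε ↦ ?_⟩
  · have hcpt := isCompact_iUnion_image_of_isCompact_range hcont hcompact hB
    rw [hF, hcpt.isClosed.closure_eq]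
    obtain ⟨b, hb⟩ := hBne
    exact ⟨⟨f (Classical.arbitrary I) b, mem_iUnion_of_mem _ (mem_image_of_mem _ hb)⟩, hcpt⟩
  · have hequi := equicontinuous_of_totallyBounded_range hcont hcompact.totallyBounded
    obtain ⟨δ, hδ, hclose⟩ := hequi.exists_pos_forall_dist_lt_of_isCompact hC hε
    refine ⟨δ, hδ, fun B _ _ hBC ↦ ?_⟩
    change hausdorffEDist (F B) (F C) ≤ _
    rw [hF, hF, hausdorffEDist_closure]
    exact hausdorffEDist_iUnion_image_le (fun c hc b hcb i ↦ (hclose c hc b hcb i).le) hBC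
end

section
/- Let φ : X → 𝒫(X)∖{∅} be upper semicontinuous and let F be its Hutchinson operator. If A is a strict attractor of F, i.e., A is nonempty compact and there is an open U ⊇ A such that F^n(B) → A in Hausdorff distance for every nonempty compact B ⊆ U, then A is invariant: F(A) = A. -/
theorem strict_attractor_invariant {X : Type*} [MetricSpace X]
    (φ : X → Set X) (hne : ∀ x, (φ x).Nonempty)
    (husc : ∀ x₀, ∀ ε > (0 : ℝ), ∃ δ > (0 : ℝ),
      (⋃ x ∈ Metric.ball x₀ δ, φ x) ⊆ Metric.thickening ε (φ x₀))
    (F : Set X → Set X) (hF : ∀ B : Set X, F B = closure (⋃ b ∈ B, φ b))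
    (A : Set X) (hA : A.Nonempty) (hAc : IsCompact A)
    (U : Set X) (hU : IsOpen U) (hAU : A ⊆ U)
    (hattr : ∀ B : Set X, B.Nonempty → IsCompact B → B ⊆ U →
      Filter.Tendsto (fun n => EMetric.hausdorffEdist (F^[n] B) A)
        Filter.atTop (nhds 0)) :
    F A = A := by
  have hFclosed : ∀ B, IsClosed (F B) := by
    intro B; rw [hF]; exact isClosed_closure
  have Fmono : ∀ B C : Set X, B ⊆ C → F B ⊆ F C := by
    intro B C h
    rw [hF, hF]
    exact closure_mono (Set.biUnion_subset_biUnion_left h)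
  have hφFA : ∀ c ∈ A, φ c ⊆ F A := by
    intro c hc
    rw [hF]
    exact (Set.subset_biUnion_of_mem hc).trans subset_closure
  -- uniform USC estimate near the compact set A
  have key : ∀ ε > (0 : ℝ), ∃ δ > (0 : ℝ),
      ∀ x ∈ Metric.thickening δ A, φ x ⊆ Metric.thickening ε (F A) := by
    intro ε hε
    choose δf δfpos hδf using fun c => husc c ε hε
    obtain ⟨t, htA, hcov⟩ := hAc.elim_nhds_subcover
      (fun c => Metric.ball c (δf c / 2))
      (fun c _ => Metric.ball_mem_nhds c (half_pos (δfpos c)))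
    have htne : t.Nonempty := by
      rcases hA with ⟨a, ha⟩
      rcases Set.mem_iUnion₂.1 (hcov ha) with ⟨i, hi, _⟩
      exact ⟨i, hi⟩
    set δ₀ : ℝ := t.inf' htne (fun c => δf c / 2) with hδ₀
    have hδ₀pos : 0 < δ₀ := by
      rw [hδ₀, Finset.lt_inf'_iff]
      intro c _; exact half_pos (δfpos c)
    refine ⟨δ₀, hδ₀pos, ?_⟩
    intro x hx
    rcases Metric.mem_thickening_iff.1 hx with ⟨c, hcA, hxc⟩
    rcases Set.mem_iUnion₂.1 (hcov hcA) with ⟨i, hit, hci⟩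
    have hδ₀le : δ₀ ≤ δf i / 2 := Finset.inf'_le _ hit
    have hxi : x ∈ Metric.ball i (δf i) := by
      rw [Metric.mem_ball]
      calc dist x i ≤ dist x c + dist c i := dist_triangle _ _ _
        _ < δf i / 2 + δf i / 2 := add_lt_add (lt_of_lt_of_le hxc hδ₀le)
              (Metric.mem_ball.1 hci)
        _ = δf i := by ring
    intro y hy
    have : y ∈ Metric.thickening ε (φ i) :=
      hδf i (Set.mem_biUnion hxi hy)
    rcases Metric.mem_thickening_iff.1 this with ⟨z, hz, hyz⟩
    exact Metric.mem_thickening_iff.2 ⟨z, hφFA i (htA i hit) hz, hyz⟩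
  have htend := hattr A hA hAc hAU
  -- A ⊆ F A
  have hAF : A ⊆ F A := by
    intro a ha
    have : a ∈ closure (F A) := by
      rw [Metric.mem_closure_iff]
      intro ε hε
      obtain ⟨δ, hδpos, hδ⟩ := key (ε / 4) (by positivity)
      set η : ℝ := min δ (ε / 4) with hη
      have hηpos : 0 < η := lt_min hδpos (by positivity)
      have hev : ∀ᶠ n in Filter.atTop,
          EMetric.hausdorffEdist (F^[n] A) A < ENNReal.ofReal η :=
        htend.eventually (gt_mem_nhds (by
          simp [ENNReal.ofReal_pos, hηpos]))
      rcases Filter.eventually_atTop.1 hev with ⟨N, hN⟩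
      have h1 : EMetric.hausdorffEdist (F^[N] A) A < ENNReal.ofReal η :=
        hN N le_rfl
      have h2 : EMetric.hausdorffEdist (F^[N + 1] A) A < ENNReal.ofReal η :=
        hN (N + 1) (Nat.le_succ N)
      -- a is within η of F^[N+1] A
      have ha' : EMetric.infEdist a (F^[N + 1] A) < ENNReal.ofReal η := by
        calc EMetric.infEdist a (F^[N + 1] A)
            ≤ EMetric.hausdorffEdist A (F^[N + 1] A) :=
              EMetric.infEdist_le_hausdorffEdist_of_mem ha
          _ = EMetric.hausdorffEdist (F^[N + 1] A) A :=
              EMetric.hausdorffEdist_comm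
          _ < ENNReal.ofReal η := h2
      rcases EMetric.infEdist_lt_iff.1 ha' with ⟨y, hy, hay⟩
      have hay' : dist a y < η := by
        rwa [edist_lt_ofReal] at hay
      -- y is in the closure of ⋃_{b ∈ F^[N] A} φ b
      have hy' : y ∈ closure (⋃ b ∈ F^[N] A, φ b) := by
        rw [Function.iterate_succ_apply', hF] at hy
        exact hy
      rcases Metric.mem_closure_iff.1 hy' η hηpos with ⟨y', hy'mem, hyy'⟩
      rcases Set.mem_iUnion₂.1 hy'mem with ⟨b, hbN, hyb⟩
      -- b is δ-close to A
      have hb : b ∈ Metric.thickening δ A := by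
        rw [Metric.mem_thickening_iff_infEdist_lt]
        calc EMetric.infEdist b A
            ≤ EMetric.hausdorffEdist (F^[N] A) A :=
              EMetric.infEdist_le_hausdorffEdist_of_mem hbN
          _ < ENNReal.ofReal η := h1
          _ ≤ ENNReal.ofReal δ := ENNReal.ofReal_le_ofReal (min_le_left _ _)
      have : y' ∈ Metric.thickening (ε / 4) (F A) := hδ b hb hyb
      rcases Metric.mem_thickening_iff.1 this with ⟨z, hzFA, hy'z⟩
      refine ⟨z, hzFA, ?_⟩
      have hη4 : η ≤ ε / 4 := min_le_right _ _
      calc dist a z ≤ dist a y + dist y y' + dist y' z := dist_triangle4 _ _ _ _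
        _ < η + η + ε / 4 := by
            exact add_lt_add (add_lt_add hay' hyy') hy'z
        _ ≤ ε / 4 + ε / 4 + ε / 4 := by linarith
        _ < ε := by linarith
    rwa [(hFclosed A).closure_eq] at this
  -- the iterates are increasing
  have chain : ∀ n, F^[n] A ⊆ F^[n + 1] A := by
    intro n
    induction n with
    | zero => simpa using hAF
    | succ n ih =>
        rw [Function.iterate_succ_apply', Function.iterate_succ_apply']
        exact Fmono _ _ ih
  have hFsub : ∀ n, F A ⊆ F^[n + 1] A := by
    intro n
    induction n with
    | zero => simp
    | succ n ih => exact ih.trans (chain (n + 1))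
  -- F A ⊆ A
  have hFA : F A ⊆ A := by
    intro y hy
    have : y ∈ closure A := by
      rw [Metric.mem_closure_iff]
      intro ε hε
      have hev : ∀ᶠ n in Filter.atTop,
          EMetric.hausdorffEdist (F^[n] A) A < ENNReal.ofReal ε :=
        htend.eventually (gt_mem_nhds (by
          simp [ENNReal.ofReal_pos, hε]))
      rcases Filter.eventually_atTop.1 hev with ⟨N, hN⟩
      have h1 : EMetric.hausdorffEdist (F^[N + 1] A) A < ENNReal.ofReal ε :=
        hN (N + 1) (Nat.le_succ N)
      have hyN : y ∈ F^[N + 1] A := hFsub N hy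
      have : EMetric.infEdist y A < ENNReal.ofReal ε :=
        lt_of_le_of_lt (EMetric.infEdist_le_hausdorffEdist_of_mem hyN) h1
      rcases EMetric.infEdist_lt_iff.1 this with ⟨z, hz, hyz⟩
      exact ⟨z, hz, by rwa [edist_lt_ofReal] at hyz⟩
    rwa [hAc.isClosed.closure_eq] at this
  exact Set.Subset.antisymm hFA hAF
end
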